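/- Let E be a Euclidean Jordan algebra with identity e of rank r, and let K be its cone of squares. Suppose e = α₁d₁ + ⋯ + α_m d_m where each α_i > 0 and each d_i is a primitive idempotent. Then α_i ≤ 1 for all i, and consequently m ≥ r = trace(e). -/

import Mathlib

/-- A Euclidean Jordan algebra structure on a finite-dimensional real inner product
space `E`: a commutative bilinear product satisfying the Jordan identity, compatible with
the inner product, and possessing an identity element. -/
structure EuclideanJordanAlgebra (E : Type*) [NormedAddCommGroup E]
    [InnerProductSpace ℝ E] [FiniteDimensional ℝ E] where
  /-- the Jordan product -/
  mul : E → E → E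
  mul_comm : ∀ x y, mul x y = mul y x
  mul_add : ∀ x y z, mul x (y + z) = mul x y + mul x z
  mul_smul : ∀ (c : ℝ) (x y : E), mul x (c • y) = c • mul x y
  jordan : ∀ x y, mul x (mul (mul x x) y) = mul (mul x x) (mul x y)
  inner_assoc : ∀ x y z, (inner ℝ (mul x y) z : ℝ) = inner ℝ y (mul x z)
  one : E
  one_mul : ∀ x, mul one x = x

/-- The cone of squares of a Euclidean Jordan algebra. -/
def EuclideanJordanAlgebra.coneOfSquares {E : Type*} [NormedAddCommGroup E]
    [InnerProductSpace ℝ E] [FiniteDimensional ℝ E] (J : EuclideanJordanAlgebra E) : Set E :=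
  {x | ∃ z : E, x = J.mul z z}

/-- An idempotent of a Euclidean Jordan algebra. -/
def EuclideanJordanAlgebra.IsIdempotent {E : Type*} [NormedAddCommGroup E]
    [InnerProductSpace ℝ E] [FiniteDimensional ℝ E] (J : EuclideanJordanAlgebra E)
    (c : E) : Prop :=
  J.mul c c = c

/-- A primitive idempotent: a nonzero idempotent which is not the sum of two nonzero
orthogonal idempotents. -/
def EuclideanJordanAlgebra.IsPrimitiveIdempotent {E : Type*} [NormedAddCommGroup E]
    [InnerProductSpace ℝ E] [FiniteDimensional ℝ E] (J : EuclideanJordanAlgebra E)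
    (c : E) : Prop :=
  J.IsIdempotent c ∧ c ≠ 0 ∧
    ¬∃ a b : E, a ≠ 0 ∧ b ≠ 0 ∧ J.IsIdempotent a ∧ J.IsIdempotent b ∧
      J.mul a b = 0 ∧ c = a + b

/-!
For an idempotent `d` the multiplication operator `L_d` is self-adjoint and satisfies
`2 L_d³ = 3 L_d² - L_d` (a linearization of the Jordan identity), so it is positive
semidefinite; in particular any two idempotents have a nonnegative inner product. Pairing
`e = ∑ⱼ αⱼ dⱼ` with `dᵢ` then gives `‖dᵢ‖² = ∑ⱼ αⱼ ⟪dⱼ, dᵢ⟫ ≥ αᵢ ‖dᵢ‖²`, i.e. `αᵢ ≤ 1`,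
and applying the trace gives `r = ∑ᵢ αᵢ ≤ m`.
-/

open scoped RealInnerProductSpace

/-- On the spectrum `{0, 1/2, 1}` of `T` one has `t = t² + 4 (t - t²)²`, which exhibits
`⟪T x, x⟫` as a sum of squares. -/
theorem LinearMap.IsSymmetric.inner_map_self_nonneg_of_cubic {F : Type*}
    [NormedAddCommGroup F] [InnerProductSpace ℝ F] {T : F →ₗ[ℝ] F} (hT : T.IsSymmetric)
    (hcubic : ∀ x, (2 : ℝ) • T (T (T x)) = (3 : ℝ) • T (T x) - T x) (x : F) :
    0 ≤ ⟪T x, x⟫ := by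
  have h₁ := congrArg (⟪·, x⟫) (hcubic x)
  have h₂ := congrArg (⟪·, x⟫) (hcubic (T x))
  simp only [real_inner_smul_left, inner_sub_left] at h₁ h₂
  have h₃ := hT (T x) x
  have h₄ := hT (T (T x)) x
  have h₅ := hT (T (T x)) (T x)
  have h₆ := hT (T (T (T x))) x
  have hcomm := real_inner_comm (T x) (T (T x))
  have hsos : ⟪T x, x⟫ = ⟪T x, T x⟫ + 4 * ⟪T x - T (T x), T x - T (T x)⟫ := by
    simp only [inner_sub_left, inner_sub_right]
    linear_combination h₁ - 2 * h₂ + 5 * h₃ - 8 * h₄ - 4 * hcomm + 4 * h₅ + 4 * h₆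
  rw [hsos]
  exact add_nonneg real_inner_self_nonneg (mul_nonneg zero_le_four real_inner_self_nonneg)

namespace EuclideanJordanAlgebra

variable {E : Type*} [NormedAddCommGroup E] [InnerProductSpace ℝ E] [FiniteDimensional ℝ E]
  (J : EuclideanJordanAlgebra E)

def mulLeft (x : E) : E →ₗ[ℝ] E where
  toFun := J.mul x
  map_add' := J.mul_add x
  map_smul' c := J.mul_smul c x

@[simp]
theorem mulLeft_apply (x y : E) : J.mulLeft x y = J.mul x y := rfl

theorem isSymmetric_mulLeft (x : E) : (J.mulLeft x).IsSymmetric := J.inner_assoc x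

theorem mul_sub (x y z : E) : J.mul x (y - z) = J.mul x y - J.mul x z :=
  (J.mulLeft x).map_sub y z

theorem add_mul (x y z : E) : J.mul (x + y) z = J.mul x z + J.mul y z := by
  rw [J.mul_comm, J.mul_add, J.mul_comm z, J.mul_comm z]

theorem sub_mul (x y z : E) : J.mul (x - y) z = J.mul x z - J.mul y z := by
  rw [J.mul_comm, J.mul_sub, J.mul_comm z, J.mul_comm z]

/-- The part of the Jordan identity for `a ± b` that is linear in `b`. -/
theorem jordan_linearized (a b y : E) :
    (2 : ℝ) • J.mul a (J.mul (J.mul a b) y) + J.mul b (J.mul (J.mul a a) y) =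
      J.mul (J.mul a a) (J.mul b y) + (2 : ℝ) • J.mul (J.mul a b) (J.mul a y) := by
  have hplus := J.jordan (a + b) y
  have hminus := J.jordan (a - b) y
  simp only [J.mul_add, J.add_mul, J.mul_sub, J.sub_mul, J.mul_comm b a] at hplus hminus
  linear_combination (norm := module) (1 / 2 : ℝ) • (hplus - hminus) - J.jordan b y

variable {J}

theorem IsIdempotent.mulLeft_cubic {d : E} (hd : J.IsIdempotent d) (u : E) :
    (2 : ℝ) • J.mulLeft d (J.mulLeft d (J.mulLeft d u)) =
      (3 : ℝ) • J.mulLeft d (J.mulLeft d u) - J.mulLeft d u := by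
  have h := J.jordan_linearized d u d
  have hdd : J.mul d d = d := hd
  simp only [hdd, J.mul_comm u d, J.mul_comm (J.mul d u) d] at h
  simp only [mulLeft_apply]
  linear_combination (norm := module) h

theorem IsIdempotent.inner_mul_self_nonneg {d : E} (hd : J.IsIdempotent d) (x : E) :
    0 ≤ ⟪J.mul d x, x⟫ :=
  (J.isSymmetric_mulLeft d).inner_map_self_nonneg_of_cubic hd.mulLeft_cubic x

theorem IsIdempotent.inner_nonneg {c d : E} (hc : J.IsIdempotent c) (hd : J.IsIdempotent d) :
    0 ≤ ⟪c, d⟫ := by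
  have hdd : J.mul d d = d := hd
  calc 0 ≤ ⟪J.mul c d, d⟫ := hc.inner_mul_self_nonneg d
    _ = ⟪c, d⟫ := by rw [J.mul_comm, J.inner_assoc, hdd]

theorem IsIdempotent.inner_one {d : E} (hd : J.IsIdempotent d) : ⟪J.one, d⟫ = ⟪d, d⟫ := by
  have hdd : J.mul d d = d := hd
  conv_lhs => rw [← hdd, ← J.inner_assoc, J.mul_comm, J.one_mul]

variable (J)

theorem coeff_le_one_of_one_eq_sum {ι : Type*} [Fintype ι] {α : ι → ℝ} {d : ι → E}
    (hα : ∀ i, 0 ≤ α i) (hd : ∀ i, J.IsIdempotent (d i)) (hsum : J.one = ∑ i, α i • d i)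
    {i : ι} (hi : d i ≠ 0) : α i ≤ 1 := by
  have hnorm : 0 < ⟪d i, d i⟫ := real_inner_self_pos.mpr hi
  have hpair : ⟪d i, d i⟫ = ∑ j, α j * ⟪d j, d i⟫ := by
    rw [← (hd i).inner_one, hsum, sum_inner]
    simp only [real_inner_smul_left]
  have hterm : α i * ⟪d i, d i⟫ ≤ ∑ j, α j * ⟪d j, d i⟫ :=
    Finset.single_le_sum (f := fun j => α j * ⟪d j, d i⟫)
      (fun j _ => mul_nonneg (hα j) ((hd j).inner_nonneg (hd i))) (Finset.mem_univ i)
  nlinarith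

end EuclideanJordanAlgebra

/-- Let `E` be a Euclidean Jordan algebra of rank `r` with identity `e`, and
let `τ` be the trace form, which is linear, takes the value 1 on primitive idempotents and
the value `r` on `e`. If `e = α₁ d₁ + ⋯ + α_m d_m` with each `α_i > 0` and each `d_i` a
primitive idempotent, then `α_i ≤ 1` for all `i`, and consequently `m ≥ r = trace e`. -/
theorem caratheodory_stmt18 {E : Type*} [NormedAddCommGroup E]
    [InnerProductSpace ℝ E] [FiniteDimensional ℝ E] (J : EuclideanJordanAlgebra E)
    (r : ℕ) (τ : E →ₗ[ℝ] ℝ)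
    (hτprim : ∀ c : E, J.IsPrimitiveIdempotent c → τ c = 1)
    (hτe : τ J.one = r)
    (m : ℕ) (α : Fin m → ℝ) (d : Fin m → E)
    (hα : ∀ i, 0 < α i)
    (hd : ∀ i, J.IsPrimitiveIdempotent (d i))
    (hdecomp : J.one = ∑ i, α i • d i) :
    (∀ i, α i ≤ 1) ∧ r ≤ m := by
  have hle : ∀ i, α i ≤ 1 := fun i =>
    J.coeff_le_one_of_one_eq_sum (fun j => (hα j).le) (fun j => (hd j).1) hdecomp (hd i).2.1
  have htrace : (r : ℝ) = ∑ i, α i := by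
    simp [← hτe, hdecomp, hτprim _ (hd _)]
  have hrm : (r : ℝ) ≤ m := by
    simpa [htrace] using Finset.sum_le_sum fun i (_ : i ∈ Finset.univ) => hle i
  exact ⟨hle, by exact_mod_cast hrm⟩
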